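/- arXiv:2603.16793 — 4 statements merged into one kernel-verified Lean document; each statement's English description precedes it below -/
import Mathlib

section
/- Let (A₀, A₁) be a normal subcouple of a compatible couple (E₀, E₁), i.e. A₀+A₁ is closed in E₀+E₁ and Aⱼ = (A₀+A₁) ∩ Eⱼ for j = 0,1. Then the canonical projection from E₀ ∩ E₁ to (E₀/A₀) ∩ (E₁/A₁) is surjective: every element of (E₀/A₀) ∩ (E₁/A₁) lifts to an element of E₀ ∩ E₁. -/
/-!
STATEMENT 0: If (A₀, A₁) is a normal subcouple of a compatible couple (E₀, E₁)
(A₀+A₁ closed in E₀+E₁ and Aⱼ = (A₀+A₁) ∩ Eⱼ), then the projection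
E₀ ∩ E₁ → (E₀/A₀) ∩ (E₁/A₁) is surjective: any coset having representatives
u₀ ∈ E₀ and u₁ ∈ E₁ (i.e. u₀ - u₁ ∈ A₀+A₁) admits a representative in E₀ ∩ E₁.
-/

/-- The Peetre K-functional of a couple of subspaces with given norms.
`Kfun E0 E1 N0 N1 1` is the sum norm on `E0 + E1`. -/
noncomputable def Kfun {X : Type*} [AddCommGroup X] [Module ℝ X]
    (E0 E1 : Submodule ℝ X) (N0 N1 : X → ℝ) (t : ℝ) (u : X) : ℝ :=
  sInf {r : ℝ | ∃ a ∈ E0, ∃ b ∈ E1, u = a + b ∧ r = N0 a + t * N1 b}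

/-- `N` behaves as a (complete-able) norm on the subspace `S`. -/
def IsNormOn {X : Type*} [AddCommGroup X] [Module ℝ X]
    (S : Submodule ℝ X) (N : X → ℝ) : Prop :=
  (∀ x, 0 ≤ N x) ∧ N 0 = 0 ∧ (∀ x y, N (x + y) ≤ N x + N y) ∧
    (∀ (c : ℝ) (x : X), N (c • x) = |c| * N x) ∧ (∀ x ∈ S, N x = 0 → x = 0)

theorem stmt0 {X : Type*} [AddCommGroup X] [Module ℝ X]
    (E0 E1 A0 A1 : Submodule ℝ X) (N0 N1 : X → ℝ)
    (hN0 : IsNormOn E0 N0) (hN1 : IsNormOn E1 N1)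
    (hA0 : A0 ≤ E0) (hA1 : A1 ≤ E1)
    -- A₀+A₁ is closed in E₀+E₁ (with its sum norm `Kfun E0 E1 N0 N1 1`)
    (hclosed : ∀ f : ℕ → X, (∀ n, f n ∈ A0 ⊔ A1) → ∀ u ∈ E0 ⊔ E1,
      (∀ ε > 0, ∃ K : ℕ, ∀ n ≥ K, Kfun E0 E1 N0 N1 1 (f n - u) < ε) → u ∈ A0 ⊔ A1)
    -- normality: Aⱼ = (A₀+A₁) ∩ Eⱼ
    (hnorm0 : A0 = (A0 ⊔ A1) ⊓ E0) (hnorm1 : A1 = (A0 ⊔ A1) ⊓ E1) :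
    ∀ u0 ∈ E0, ∀ u1 ∈ E1, u0 - u1 ∈ A0 ⊔ A1 →
      ∃ v ∈ E0 ⊓ E1, v - u0 ∈ A0 ⊔ A1 := by
  
  intro u0 hu0 u1 hu1 hdiff
  rw [Submodule.mem_sup] at hdiff
  obtain ⟨a0, ha0, a1, ha1, heq⟩ := hdiff
  have h2 : u0 - a0 = u1 + a1 := by
    have h := heq.symm; rw [sub_eq_iff_eq_add] at h ⊢; rw [h]; abel
  refine ⟨u0 - a0, ⟨E0.sub_mem hu0 (hA0 ha0), h2 ▸ E1.add_mem hu1 (hA1 ha1)⟩, ?_⟩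
  have : u0 - a0 - u0 = -a0 := by abel
  rw [this]
  exact Submodule.mem_sup_left (A0.neg_mem ha0)
end

section
/- Let (F₀*, F₁*) be a compatible couple equipped with a predual couple (F₀, F₁), let f : closure(S) → F₀*+F₁* be weak*-continuous on the closed strip closure(S) = {z : 0 ≤ Re z ≤ 1}, weak*-holomorphic on the open strip, with f(j+it) ∈ Fⱼ* and sup_{t∈ℝ} ‖f(j+it)‖_{Fⱼ*} ≤ C for j = 0,1. Then for every 0 < θ < 1 and every t > 0 one has K_t(f(θ), F₀*, F₁*) ≤ C·t^θ; in particular f(θ) ∈ (F₀*, F₁*)_{θ,∞,K} with ‖f(θ)‖_{(F₀*,F₁*)_{θ,∞,K}} ≤ C. -/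
/-! For `u` in the predual with `N0 u ≤ 1` and `N1 u ≤ t`, the scalar function `z ↦ ⟨u, f z⟩` is
bounded and holomorphic on the strip, bounded by `C` on `Re z = 0` and by `C t` on `Re z = 1`.
The three-lines theorem bounds it at `θ` by `C ^ (1 - θ) (C t) ^ θ = C t ^ θ`. -/

open Complex Complex.HadamardThreeLines

lemma closure_verticalStrip_subset (a b : ℝ) :
    closure (verticalStrip a b) ⊆ verticalClosedStrip a b :=
  closure_minimal (fun _ hz => ⟨hz.1.le, hz.2.le⟩) (isClosed_Icc.preimage continuous_re)

theorem norm_le_rpow_mul_rpow_of_unitStrip {E : Type*} [NormedAddCommGroup E] [NormedSpace ℂ E]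
    {g : ℂ → E} {a b : ℝ}
    (hcont : ContinuousOn g {z : ℂ | 0 ≤ z.re ∧ z.re ≤ 1})
    (hholo : DifferentiableOn ℂ g {z : ℂ | 0 < z.re ∧ z.re < 1})
    (hbdd : ∃ B : ℝ, ∀ z : ℂ, 0 ≤ z.re → z.re ≤ 1 → ‖g z‖ ≤ B)
    (h0 : ∀ t : ℝ, ‖g (I * t)‖ ≤ a) (h1 : ∀ t : ℝ, ‖g (1 + I * t)‖ ≤ b)
    {θ : ℝ} (hθ0 : 0 ≤ θ) (hθ1 : θ ≤ 1) :
    ‖g θ‖ ≤ a ^ (1 - θ) * b ^ θ := by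
  have hd : DiffContOnCl ℂ g (verticalStrip 0 1) :=
    ⟨hholo, hcont.mono (closure_verticalStrip_subset 0 1)⟩
  have hB : BddAbove ((norm ∘ g) '' verticalClosedStrip 0 1) := by
    obtain ⟨B, hB⟩ := hbdd
    exact ⟨B, by rintro _ ⟨z, hz, rfl⟩; exact hB z hz.1 hz.2⟩
  have ha : ∀ z ∈ re ⁻¹' {0}, ‖g z‖ ≤ a := by
    intro z (hz : z.re = 0)
    rw [show z = I * z.im by apply Complex.ext <;> simp [hz]]
    exact h0 z.im
  have hb : ∀ z ∈ re ⁻¹' {1}, ‖g z‖ ≤ b := by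
    intro z (hz : z.re = 1)
    rw [show z = 1 + I * z.im by apply Complex.ext <;> simp [hz]]
    exact h1 z.im
  simpa using norm_le_interp_of_mem_verticalClosedStrip₀₁' g
    (show (θ : ℂ) ∈ verticalClosedStrip 0 1 by simpa [verticalClosedStrip] using ⟨hθ0, hθ1⟩)
    hd hB ha hb

lemma rpow_one_sub_mul_mul_rpow_eq {C t : ℝ} (hC : 0 ≤ C) (ht : 0 ≤ t) (θ : ℝ) :
    C ^ (1 - θ) * (C * t) ^ θ = C * t ^ θ := by
  rw [Real.mul_rpow hC ht, ← mul_assoc, ← Real.rpow_add' hC (by norm_num), sub_add_cancel,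
    Real.rpow_one]

theorem stmt5 {X : Type*} [AddCommGroup X] [Module ℂ X]
    (F0 F1 : Set X) (N0 N1 : X → ℝ) (C : ℝ) (hC : 0 ≤ C)
    (f : ℂ → (X →ₗ[ℂ] ℂ))
    -- weak*-continuity on the closed strip
    (hcont : ∀ u ∈ F0 ∩ F1,
      ContinuousOn (fun z => f z u) {z : ℂ | 0 ≤ z.re ∧ z.re ≤ 1})
    -- weak*-holomorphy on the open strip
    (hholo : ∀ u ∈ F0 ∩ F1,
      DifferentiableOn ℂ (fun z => f z u) {z : ℂ | 0 < z.re ∧ z.re < 1})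
    -- boundedness (f belongs to the class 𝓕_*)
    (hbdd : ∀ u ∈ F0 ∩ F1, ∃ B : ℝ, ∀ z : ℂ, 0 ≤ z.re → z.re ≤ 1 →
      ‖f z u‖ ≤ B)
    -- boundary bounds: ‖f(it)‖_{F₀*} ≤ C and ‖f(1+it)‖_{F₁*} ≤ C
    (h0 : ∀ (t : ℝ), ∀ u ∈ F0 ∩ F1,
      ‖f (Complex.I * (t : ℂ)) u‖ ≤ C * N0 u)
    (h1 : ∀ (t : ℝ), ∀ u ∈ F0 ∩ F1,
      ‖f (1 + Complex.I * (t : ℂ)) u‖ ≤ C * N1 u) :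
    ∀ θ : ℝ, 0 < θ → θ < 1 → ∀ t : ℝ, 0 < t →
      -- K_t(f(θ), F₀*, F₁*) ≤ C·t^θ, via the duality formula for K_t:
      (∀ u ∈ F0 ∩ F1, N0 u ≤ 1 → N1 u ≤ t →
        ‖f (θ : ℂ) u‖ ≤ C * t ^ θ) ∧
      sSup {r : ℝ | ∃ u ∈ F0 ∩ F1, N0 u ≤ 1 ∧ N1 u ≤ t ∧
        r = ‖f (θ : ℂ) u‖} ≤ C * t ^ θ := by
  intro θ hθ0 hθ1 t ht
  have pointwise : ∀ u ∈ F0 ∩ F1, N0 u ≤ 1 → N1 u ≤ t → ‖f (θ : ℂ) u‖ ≤ C * t ^ θ := by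
    intro u hu hN0 hN1
    rw [← rpow_one_sub_mul_mul_rpow_eq hC ht.le θ]
    exact norm_le_rpow_mul_rpow_of_unitStrip (hcont u hu) (hholo u hu) (hbdd u hu)
      (fun s => (h0 s u hu).trans (by simpa using mul_le_mul_of_nonneg_left hN0 hC))
      (fun s => (h1 s u hu).trans (mul_le_mul_of_nonneg_left hN1 hC)) hθ0.le hθ1.le
  refine ⟨pointwise, Real.sSup_le ?_ (mul_nonneg hC (Real.rpow_nonneg ht.le θ))⟩
  rintro _ ⟨u, hu, hN0, hN1, rfl⟩
  exact pointwise u hu hN0 hN1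
end

section
/- Let (X, μ) and (Y, ν) be sigma-finite measure spaces, 1 < p < ∞, q the conjugate exponent. If x ∈ L_p(X) and f ∈ L_{p,∞}(Y), then the function x ⊗ f on X × Y, (s,t) ↦ x(s)f(t), belongs to L_{p,∞}(X × Y) with ‖x ⊗ f‖_{L_{p,∞}(X×Y)} ≤ q‖x‖_{L_p(X)}‖f‖_{L_{p,∞}(Y)}, where the L_{p,∞} norm is ‖g‖_{L_{p,∞}} = sup_{t>0} t^{−1/q} ∫₀^t μ_g(s) ds and μ_g is the decreasing rearrangement of g. -/
/-!
A bound `μ_f(s) ≤ S s^(-1/p)` on the rearrangement is equivalent to the weak-type bound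
`ν{|f| > u} ≤ (S/u)^p`, and for `S = ‖f‖_{p,∞}` the former holds because the average of an
antitone function over `(0, s)` dominates its value at `s`. By Tonelli,
`(μ × ν){|x ⊗ f| > v} = ∫ ν{|f| > v/|x a|} dμ(a) ≤ (S ‖x‖_p / v)^p`, so
`μ_{x⊗f}(s) ≤ S ‖x‖_p s^(-1/p)`, and integrating `s^(-1/p)` over `(0, t)` gives `q t^(1/q)`.

Interval integrals of non-integrable functions are `0` and `sInf ∅ = 0`, so the hypothesis on `f`
says nothing when `μ_f` is not integrable near `0` or when `ν{|f| > u} = ∞` for all `u`. In these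
cases `ε μ_f(s) ≤ μ_{x⊗f}(m s)` with `m = μ{|x| > ε} ∈ (0, ∞)` shows that `μ_{x⊗f}` vanishes or
is not integrable near `0`, so the left-hand side is `0`.
-/

open MeasureTheory

/-- Decreasing rearrangement of a real function `g` with respect to `μ`. -/
noncomputable def rearrR {α : Type*} [MeasurableSpace α] (μ : Measure α)
    (g : α → ℝ) (s : ℝ) : ℝ :=
  sInf {u : ℝ | 0 < u ∧ μ {x | u < |g x|} ≤ ENNReal.ofReal s}

open Set Filter Topology
open scoped ENNReal

section Rearrangement

variable {α : Type*} [MeasurableSpace α] {μ : Measure α} {g : α → ℝ}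

lemma rearrR_nonneg (s : ℝ) : 0 ≤ rearrR μ g s :=
  Real.sInf_nonneg fun _ hu => hu.1.le

lemma rearrR_le {s u : ℝ} (hu : 0 < u) (h : μ {x | u < |g x|} ≤ ENNReal.ofReal s) :
    rearrR μ g s ≤ u :=
  csInf_le ⟨0, fun _ hv => hv.1.le⟩ ⟨hu, h⟩

lemma rearrR_eq_zero_of_ae_eq_zero (hg : g =ᵐ[μ] 0) (s : ℝ) : rearrR μ g s = 0 := by
  refine le_antisymm (le_of_forall_gt_imp_ge_of_dense fun u hu => rearrR_le hu ?_)
    (rearrR_nonneg s)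
  have hsub : {x | u < |g x|} ⊆ {x | ¬ g x = (0 : α → ℝ) x} := fun x (hx : u < |g x|) h0 =>
    hu.not_gt (by simpa [h0] using hx)
  exact (measure_mono_null hsub (ae_iff.1 hg)).le.trans zero_le

lemma rearrR_eq_zero_of_forall_measure_eq_top (h : ∀ u > 0, μ {x | u < |g x|} = ∞) (s : ℝ) :
    rearrR μ g s = 0 := by
  refine (congrArg sInf (eq_empty_of_forall_notMem fun u hu => ?_)).trans Real.sInf_empty
  simpa [h u hu.1] using hu.2

lemma tendsto_measure_lt_abs_atTop (hg : AEMeasurable g μ) {u₀ : ℝ}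
    (h : μ {x | u₀ < |g x|} ≠ ∞) :
    Tendsto (fun u => μ {x | u < |g x|}) atTop (𝓝 0) := by
  have hempty : ⋂ u : ℝ, {x | u < |g x|} = ∅ :=
    eq_empty_of_forall_notMem fun x hx => lt_irrefl |g x| (mem_iInter.1 hx |g x|)
  simpa [hempty, Function.comp_def] using tendsto_measure_iInter_atTop (μ := μ)
    (s := fun u : ℝ => {x | u < |g x|}) (fun _ => nullMeasurableSet_lt aemeasurable_const hg.abs)
    (fun _ _ huv _ (hx : _ < _) => huv.trans_lt hx) ⟨u₀, h⟩

lemma exists_pos_measure_lt_abs_ne_zero (hg : ¬ g =ᵐ[μ] 0) :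
    ∃ ε > 0, μ {x | ε < |g x|} ≠ 0 := by
  by_contra! h
  refine hg (ae_iff.2 (measure_mono_null (fun x (hx : g x ≠ 0) => ?_)
    (measure_iUnion_null fun n : ℕ => h (1 / (n + 1)) Nat.one_div_pos_of_nat)))
  obtain ⟨n, hn⟩ := exists_nat_one_div_lt (abs_pos.2 hx)
  exact mem_iUnion.2 ⟨n, hn⟩

lemma measure_lt_abs_lt_top_of_integrable_rpow {p ε : ℝ}
    (hg : Integrable (fun x => |g x| ^ p) μ) (hp : 0 < p) (hε : 0 < ε) : μ {x | ε < |g x|} < ∞ :=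
  (measure_mono fun x (hx : ε < |g x|) => Real.rpow_lt_rpow hε.le hx hp).trans_lt
    (hg.measure_gt_lt_top (by positivity))

section Tendsto

variable (hg : Tendsto (fun u => μ {x | u < |g x|}) atTop (𝓝 0))
include hg

lemma exists_measure_lt_abs_le {s : ℝ} (hs : 0 < s) :
    ∃ u > 0, μ {x | u < |g x|} ≤ ENNReal.ofReal s := by
  obtain ⟨u, hu⟩ := ((hg.eventually (gt_mem_nhds (ENNReal.ofReal_pos.2 hs))).and
    (eventually_gt_atTop 0)).exists
  exact ⟨u, hu.2, hu.1.le⟩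

lemma le_rearrR {s u : ℝ} (hs : 0 < s) (h : ENNReal.ofReal s < μ {x | u < |g x|}) :
    u ≤ rearrR μ g s := by
  obtain ⟨v, hv, hvs⟩ := exists_measure_lt_abs_le hg hs
  refine le_csInf ⟨v, hv, hvs⟩ fun w hw => not_lt.1 fun hwu => ?_
  exact (hw.2.trans_lt h).not_ge (measure_mono fun x hx => hwu.trans hx)

lemma measure_lt_abs_le_of_rearrR_lt {s u : ℝ} (hs : 0 < s) (h : rearrR μ g s < u) :
    μ {x | u < |g x|} ≤ ENNReal.ofReal s :=
  not_lt.1 fun hlt => (le_rearrR hg hs hlt).not_gt h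

lemma rearrR_antitoneOn : AntitoneOn (rearrR μ g) (Ioi 0) := by
  intro s hs s' _ hss'
  obtain ⟨v, hv, hvs⟩ := exists_measure_lt_abs_le hg hs
  exact csInf_le_csInf ⟨0, fun _ hw => hw.1.le⟩ ⟨v, hv, hvs⟩
    fun w hw => ⟨hw.1, hw.2.trans (ENNReal.ofReal_le_ofReal hss')⟩

end Tendsto

end Rearrangement

lemma mul_rpow_neg_one_div_lt_iff {C u s p : ℝ} (hC : 0 ≤ C) (hu : 0 < u) (hs : 0 < s)
    (hp : 0 < p) : C * s ^ (-(1 / p)) < u ↔ (C / u) ^ p < s := by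
  rw [Real.rpow_neg hs.le, ← div_eq_mul_inv, div_lt_iff₀ (by positivity), ← div_lt_iff₀' hu,
    one_div, Real.lt_rpow_inv_iff_of_pos (by positivity) hs.le hp]

section WeakType

variable {α : Type*} [MeasurableSpace α] {μ : Measure α} {g : α → ℝ} {C p : ℝ}

lemma rearrR_le_of_measure_le (hp : 0 < p) (hC : 0 ≤ C)
    (h : ∀ u > 0, μ {x | u < |g x|} ≤ ENNReal.ofReal ((C / u) ^ p)) :
    ∀ s > 0, rearrR μ g s ≤ C * s ^ (-(1 / p)) := by
  refine fun s hs => le_of_forall_gt_imp_ge_of_dense fun v hv => ?_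
  have hv0 : 0 < v := (by positivity : 0 ≤ C * s ^ (-(1 / p))).trans_lt hv
  exact rearrR_le hv0 <| (h v hv0).trans <| ENNReal.ofReal_le_ofReal
    ((mul_rpow_neg_one_div_lt_iff hC hv0 hs hp).1 hv).le

lemma measure_lt_abs_le_of_rearrR_le (hg : Tendsto (fun u => μ {x | u < |g x|}) atTop (𝓝 0))
    (hp : 0 < p) (hC : 0 ≤ C) (h : ∀ s > 0, rearrR μ g s ≤ C * s ^ (-(1 / p))) :
    ∀ u > 0, μ {x | u < |g x|} ≤ ENNReal.ofReal ((C / u) ^ p) := by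
  refine fun u hu => ge_of_tendsto
    (ENNReal.continuous_ofReal.continuousWithinAt (s := Ioi ((C / u) ^ p))) ?_
  filter_upwards [self_mem_nhdsWithin] with s (hs : (C / u) ^ p < s)
  have hs0 : 0 < s := (by positivity : 0 ≤ (C / u) ^ p).trans_lt hs
  exact measure_lt_abs_le_of_rearrR_lt hg hs0 <|
    (h s hs0).trans_lt ((mul_rpow_neg_one_div_lt_iff hC hu hs0 hp).2 hs)

end WeakType

section Averages

variable {h k : ℝ → ℝ} {p q : ℝ}

lemma rpow_neg_one_div_mul_integral_le (hpq : p.HolderConjugate q) {C : ℝ} (hC : 0 ≤ C)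
    (hh : ∀ s > 0, h s ≤ C * s ^ (-(1 / p))) {t : ℝ} (ht : 0 < t) :
    t ^ (-(1 / q)) * ∫ s in (0 : ℝ)..t, h s ≤ q * C := by
  by_cases hint : IntervalIntegrable h volume 0 t
  swap
  · rw [intervalIntegral.integral_undef hint, mul_zero]
    exact mul_nonneg hpq.symm.nonneg hC
  have hexp : -(1 / p) + 1 = 1 / q := by
    rw [one_div, one_div, ← hpq.one_sub_inv]; ring
  have hp1 : -1 < -(1 / p) := by
    rw [neg_lt_neg_iff, one_div]; exact inv_lt_one_of_one_lt₀ hpq.lt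
  have hpow : IntervalIntegrable (fun s => C * s ^ (-(1 / p))) volume 0 t :=
    (intervalIntegral.intervalIntegrable_rpow' hp1).const_mul C
  calc t ^ (-(1 / q)) * ∫ s in (0 : ℝ)..t, h s
      ≤ t ^ (-(1 / q)) * ∫ s in (0 : ℝ)..t, C * s ^ (-(1 / p)) := by
        gcongr
        exact intervalIntegral.integral_mono_on_of_le_Ioo ht.le hint hpow fun s hs => hh s hs.1
    _ = q * C * (t ^ (-(1 / q)) * t ^ (1 / q)) := by
        rw [intervalIntegral.integral_const_mul, integral_rpow (Or.inl hp1), hexp,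
          Real.zero_rpow (one_div_ne_zero hpq.symm.ne_zero), sub_zero, div_div_eq_mul_div,
          div_one]
        ring
    _ = q * C := by
        rw [← Real.rpow_add ht, neg_add_cancel, Real.rpow_zero, mul_one]

lemma le_mul_rpow_neg_one_div_of_integral_le (hpq : p.HolderConjugate q)
    (hanti : AntitoneOn h (Ioi 0)) (hint : ∀ s > 0, IntervalIntegrable h volume 0 s) {S : ℝ}
    (hS : ∀ s > 0, s ^ (-(1 / q)) * ∫ r in (0 : ℝ)..s, h r ≤ S) :
    ∀ s > 0, h s ≤ S * s ^ (-(1 / p)) := by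
  intro s hs
  have hmean : s * h s ≤ ∫ r in (0 : ℝ)..s, h r := by
    simpa [mul_comm] using intervalIntegral.integral_mono_on_of_le_Ioo hs.le
      intervalIntegrable_const (hint s hs) fun r hr => hanti hr.1 hs hr.2.le
  have hexp : -(1 / q) + 1 = 1 / p := by
    rw [one_div, one_div, ← hpq.symm.one_sub_inv]; ring
  calc h s = s ^ (-(1 / q)) * (s * h s) * s ^ (-(1 / p)) := by
        rw [← mul_assoc, ← Real.rpow_add_one hs.ne', hexp, mul_comm, ← mul_assoc,
          ← Real.rpow_add hs, neg_add_cancel, Real.rpow_zero, one_mul]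
    _ ≤ S * s ^ (-(1 / p)) := by
        gcongr
        exact (mul_le_mul_of_nonneg_left hmean (by positivity)).trans (hS s hs)

lemma AntitoneOn.intervalIntegrable_zero (hanti : AntitoneOn h (Ioi 0)) {a b : ℝ} (ha : 0 < a)
    (hint : IntervalIntegrable h volume 0 a) (hb : 0 < b) : IntervalIntegrable h volume 0 b := by
  rcases le_total b a with hba | hab
  · exact hint.mono_set (uIcc_subset_uIcc_left (by simp [uIcc_of_le ha.le, hb.le, hba]))
  · refine hint.trans (AntitoneOn.intervalIntegrable (hanti.mono ?_))
    rw [uIcc_of_le hab]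
    exact fun s hs => ha.trans_le hs.1

lemma AntitoneOn.intervalIntegrable_of_le_comp_mul (hanti : AntitoneOn h (Ioi 0))
    (hnn : ∀ s, 0 ≤ h s) {c m t : ℝ} (hc : 0 < c) (hm : 0 < m) (ht : 0 < t)
    (hk : IntervalIntegrable k volume 0 t) (hle : ∀ s > 0, c * h s ≤ k (m * s)) :
    IntervalIntegrable h volume 0 (t / m) := by
  have hkm := (hk.comp_mul_left (c := m)).const_mul c⁻¹
  rw [zero_div] at hkm
  refine hkm.mono_fun' ?_ ?_
  · rw [uIoc_of_le (by positivity : (0 : ℝ) ≤ t / m)]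
    exact (aemeasurable_restrict_of_antitoneOn measurableSet_Ioc
      (hanti.mono Ioc_subset_Ioi_self)).aestronglyMeasurable
  · rw [uIoc_of_le (by positivity : (0 : ℝ) ≤ t / m)]
    refine ae_restrict_of_forall_mem measurableSet_Ioc fun s hs => ?_
    show ‖h s‖ ≤ c⁻¹ * k (m * s)
    rw [Real.norm_of_nonneg (hnn s), le_inv_mul_iff₀ hc]
    exact hle s hs.1

end Averages

section Product

variable {X Y : Type*} [MeasurableSpace X] [MeasurableSpace Y] {μ : Measure X} {ν : Measure Y}
  {x : X → ℝ} {f : Y → ℝ}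

lemma prod_measure_lt_abs_mul [SFinite ν] (hxm : Measurable x) (hfm : Measurable f) (v : ℝ) :
    μ.prod ν {w | v < |x w.1 * f w.2|} = ∫⁻ a, ν {b | v < |x a * f b|} ∂μ :=
  Measure.prod_apply (measurableSet_lt measurable_const
    ((hxm.comp measurable_fst).mul (hfm.comp measurable_snd)).abs)

lemma measure_lt_abs_const_mul_le {C p : ℝ} (hC : 0 ≤ C)
    (hf : ∀ u > 0, ν {y | u < |f y|} ≤ ENNReal.ofReal ((C / u) ^ p)) {v : ℝ} (hv : 0 < v)
    (b : ℝ) : ν {y | v < |b * f y|} ≤ ENNReal.ofReal ((C / v) ^ p * |b| ^ p) := by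
  rcases eq_or_ne b 0 with rfl | hb
  · simp [hv.not_gt]
  have hb' : 0 < |b| := abs_pos.2 hb
  have hset : {y | v < |b * f y|} = {y | v / |b| < |f y|} := by
    ext y
    rw [mem_ofPred_eq, mem_ofPred_eq, abs_mul, div_lt_iff₀' hb']
  rw [hset, ← Real.mul_rpow (by positivity) hb'.le, div_mul_eq_mul_div, ← div_div_eq_mul_div]
  exact hf _ (by positivity)

lemma prod_measure_lt_abs_mul_le [SFinite ν] (hxm : Measurable x) (hfm : Measurable f)
    {C p : ℝ} (hp : 0 < p) (hC : 0 ≤ C) (hxp : Integrable (fun a => |x a| ^ p) μ)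
    (hf : ∀ u > 0, ν {y | u < |f y|} ≤ ENNReal.ofReal ((C / u) ^ p)) :
    ∀ v > 0, μ.prod ν {w | v < |x w.1 * f w.2|} ≤
      ENNReal.ofReal ((C * (∫ a, |x a| ^ p ∂μ) ^ (1 / p) / v) ^ p) := by
  intro v hv
  have hI : 0 ≤ ∫ a, |x a| ^ p ∂μ := integral_nonneg fun a => by positivity
  have hnorm : ((∫ a, |x a| ^ p ∂μ) ^ (1 / p)) ^ p = ∫ a, |x a| ^ p ∂μ := by
    rw [← Real.rpow_mul hI, one_div_mul_cancel hp.ne', Real.rpow_one]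
  calc μ.prod ν {w | v < |x w.1 * f w.2|}
      ≤ ∫⁻ a, ENNReal.ofReal ((C / v) ^ p) * ENNReal.ofReal (|x a| ^ p) ∂μ := by
        rw [prod_measure_lt_abs_mul hxm hfm]
        refine lintegral_mono fun a => ?_
        rw [← ENNReal.ofReal_mul (by positivity)]
        exact measure_lt_abs_const_mul_le hC hf hv (x a)
    _ = ENNReal.ofReal ((C / v) ^ p * ∫ a, |x a| ^ p ∂μ) := by
        rw [lintegral_const_mul' _ _ ENNReal.ofReal_ne_top, ← ofReal_integral_eq_lintegral_ofReal
          hxp (ae_of_all _ fun a => by positivity), ← ENNReal.ofReal_mul (by positivity)]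
    _ = ENNReal.ofReal ((C * (∫ a, |x a| ^ p ∂μ) ^ (1 / p) / v) ^ p) := by
        rw [mul_div_right_comm, Real.mul_rpow (by positivity) (by positivity), hnorm]

lemma measure_mul_measure_le_prod_measure_lt_abs_mul [SFinite ν] {ε v : ℝ} (hε : 0 < ε) :
    μ {a | ε < |x a|} * ν {b | v / ε < |f b|} ≤ μ.prod ν {w | v < |x w.1 * f w.2|} := by
  rw [← Measure.prod_prod]
  refine measure_mono fun w ⟨(hx : ε < |x w.1|), (hf : v / ε < |f w.2|)⟩ => ?_
  show v < |x w.1 * f w.2|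
  rw [abs_mul, ← mul_div_cancel₀ v hε.ne']
  nlinarith [abs_nonneg (f w.2)]

end Product

section ProductRearrangement

variable {X Y : Type*} [MeasurableSpace X] [MeasurableSpace Y] {μ : Measure X} {ν : Measure Y}
  [SFinite ν] {x : X → ℝ} {f : Y → ℝ}

lemma mul_rearrR_le_rearrR_mul {ε : ℝ} (hε : 0 < ε) (hm0 : μ {a | ε < |x a|} ≠ 0)
    (hmtop : μ {a | ε < |x a|} ≠ ∞)
    (hP : Tendsto (fun v => μ.prod ν {w | v < |x w.1 * f w.2|}) atTop (𝓝 0)) {s : ℝ}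
    (hs : 0 < s) :
    ε * rearrR ν f s ≤
      rearrR (μ.prod ν) (fun w => x w.1 * f w.2) ((μ {a | ε < |x a|}).toReal * s) := by
  have hms : 0 < (μ {a | ε < |x a|}).toReal * s :=
    mul_pos (ENNReal.toReal_pos hm0 hmtop) hs
  obtain ⟨v₀, hv₀, hv₀s⟩ := exists_measure_lt_abs_le hP hms
  refine le_csInf ⟨v₀, hv₀, hv₀s⟩ fun v ⟨hv, hvs⟩ => ?_
  have hfv : ν {b | v / ε < |f b|} ≤ ENNReal.ofReal s := by
    rw [← ENNReal.mul_le_mul_iff_right hm0 hmtop]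
    calc μ {a | ε < |x a|} * ν {b | v / ε < |f b|}
        ≤ μ.prod ν {w | v < |x w.1 * f w.2|} :=
          measure_mul_measure_le_prod_measure_lt_abs_mul hε
      _ ≤ ENNReal.ofReal ((μ {a | ε < |x a|}).toReal * s) := hvs
      _ = μ {a | ε < |x a|} * ENNReal.ofReal s := by
          rw [ENNReal.ofReal_mul ENNReal.toReal_nonneg, ENNReal.ofReal_toReal hmtop]
  rw [← le_div_iff₀' hε]
  exact rearrR_le (div_pos hv hε) hfv

lemma intervalIntegral_rearrR_mul_eq_zero (hxm : Measurable x) (hfm : Measurable f) {p : ℝ}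
    (hp : 0 < p) (hxp : Integrable (fun a => |x a| ^ p) μ)
    (hbad : ¬ (Tendsto (fun u => ν {b | u < |f b|}) atTop (𝓝 0) ∧
      ∀ s > 0, IntervalIntegrable (rearrR ν f) volume 0 s)) {t : ℝ} (ht : 0 < t) :
    ∫ s in (0 : ℝ)..t, rearrR (μ.prod ν) (fun w => x w.1 * f w.2) s = 0 := by
  set P := rearrR (μ.prod ν) (fun w => x w.1 * f w.2)
  suffices P = 0 ∨ ¬ IntervalIntegrable P volume 0 t by
    rcases this with hP0 | hPint
    · simp [hP0]
    · exact intervalIntegral.integral_undef hPint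
  by_cases hx0 : x =ᵐ[μ] 0
  · refine .inl (funext (rearrR_eq_zero_of_ae_eq_zero ?_))
    filter_upwards [Measure.quasiMeasurePreserving_fst.ae_eq hx0] with w (hw : x w.1 = 0)
    simp [hw]
  obtain ⟨ε, hε, hm0⟩ := exists_pos_measure_lt_abs_ne_zero hx0
  have hmtop := (measure_lt_abs_lt_top_of_integrable_rpow hxp hp hε).ne
  by_cases hPtop : ∀ v > 0, μ.prod ν {w | v < |x w.1 * f w.2|} = ∞
  · exact .inl (funext (rearrR_eq_zero_of_forall_measure_eq_top hPtop))
  push Not at hPtop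
  obtain ⟨v, -, hPv⟩ := hPtop
  have hP := tendsto_measure_lt_abs_atTop
    ((hxm.comp measurable_fst).mul (hfm.comp measurable_snd)).aemeasurable hPv
  have hf : Tendsto (fun u => ν {b | u < |f b|}) atTop (𝓝 0) := by
    refine tendsto_measure_lt_abs_atTop hfm.aemeasurable (u₀ := v / ε) fun htop => hPv ?_
    rw [← top_le_iff, ← ENNReal.mul_top hm0, ← htop]
    exact measure_mul_measure_le_prod_measure_lt_abs_mul hε
  refine .inr fun hPint => hbad ⟨hf, fun s hs => ?_⟩
  have hm : 0 < (μ {a | ε < |x a|}).toReal := ENNReal.toReal_pos hm0 hmtop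
  have hanti := rearrR_antitoneOn hf
  exact hanti.intervalIntegrable_zero (div_pos ht hm)
    (hanti.intervalIntegrable_of_le_comp_mul rearrR_nonneg hε hm ht hPint
      fun s hs => mul_rearrR_le_rearrR_mul hε hm0 hmtop hP hs) hs

end ProductRearrangement

theorem stmt7_general {X Y : Type*} [MeasurableSpace X] [MeasurableSpace Y]
    (μ : Measure X) (ν : Measure Y) [SigmaFinite ν]
    (p q : ℝ) (hp : 1 < p) (hpq : 1 / p + 1 / q = 1)
    (x : X → ℝ) (f : Y → ℝ) (hxm : Measurable x) (hfm : Measurable f)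
    -- x ∈ L_p(X)
    (hxp : Integrable (fun s => |x s| ^ p) μ)
    -- f ∈ L_{p,∞}(Y): the defining supremum is finite
    (hfw : BddAbove {r : ℝ | ∃ t : ℝ, 0 < t ∧
      r = t ^ (-(1 / q)) * ∫ s in (0:ℝ)..t, rearrR ν f s}) :
    ∀ t : ℝ, 0 < t →
      t ^ (-(1 / q)) * (∫ s in (0:ℝ)..t, rearrR (μ.prod ν) (fun w => x w.1 * f w.2) s) ≤
        q * (∫ s, |x s| ^ p ∂μ) ^ (1 / p) *
          sSup {r : ℝ | ∃ t : ℝ, 0 < t ∧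
            r = t ^ (-(1 / q)) * ∫ s in (0:ℝ)..t, rearrR ν f s} := by
  intro t ht
  have hpq' : p.HolderConjugate q :=
    Real.holderConjugate_iff.2 ⟨hp, by simpa only [one_div] using hpq⟩
  set S := sSup {r : ℝ | ∃ t : ℝ, 0 < t ∧
    r = t ^ (-(1 / q)) * ∫ s in (0:ℝ)..t, rearrR ν f s}
  have hS : ∀ s > 0, s ^ (-(1 / q)) * ∫ r in (0:ℝ)..s, rearrR ν f r ≤ S :=
    fun s hs => le_csSup hfw ⟨s, hs, rfl⟩
  have hS0 : 0 ≤ S := by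
    refine le_trans ?_ (hS 1 one_pos)
    rw [Real.one_rpow, one_mul]
    exact intervalIntegral.integral_nonneg zero_le_one fun r _ => rearrR_nonneg r
  have hI0 : 0 ≤ (∫ s, |x s| ^ p ∂μ) ^ (1 / p) :=
    Real.rpow_nonneg (integral_nonneg fun s => by positivity) _
  by_cases hf : Tendsto (fun u => ν {b | u < |f b|}) atTop (𝓝 0) ∧
      ∀ s > 0, IntervalIntegrable (rearrR ν f) volume 0 s
  · obtain ⟨hf0, hfint⟩ := hf
    have hF := le_mul_rpow_neg_one_div_of_integral_le hpq' (rearrR_antitoneOn hf0) hfint hS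
    have hdf := measure_lt_abs_le_of_rearrR_le hf0 hpq'.pos hS0 hF
    have hP := rearrR_le_of_measure_le hpq'.pos (mul_nonneg hS0 hI0)
      (prod_measure_lt_abs_mul_le hxm hfm hpq'.pos hS0 hxp hdf)
    calc _ ≤ q * (S * (∫ s, |x s| ^ p ∂μ) ^ (1 / p)) :=
          rpow_neg_one_div_mul_integral_le hpq' (mul_nonneg hS0 hI0) hP ht
      _ = _ := by ring
  · rw [intervalIntegral_rearrR_mul_eq_zero hxm hfm hpq'.pos hxp hf ht, mul_zero]
    exact mul_nonneg (mul_nonneg hpq'.symm.nonneg hI0) hS0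

theorem stmt7 {X Y : Type*} [MeasurableSpace X] [MeasurableSpace Y]
    (μ : Measure X) (ν : Measure Y) [SigmaFinite μ] [SigmaFinite ν]
    (p q : ℝ) (hp : 1 < p) (hpq : 1 / p + 1 / q = 1)
    (x : X → ℝ) (f : Y → ℝ) (hxm : Measurable x) (hfm : Measurable f)
    -- x ∈ L_p(X)
    (hxp : Integrable (fun s => |x s| ^ p) μ)
    -- f ∈ L_{p,∞}(Y): the defining supremum is finite
    (hfw : BddAbove {r : ℝ | ∃ t : ℝ, 0 < t ∧
      r = t ^ (-(1 / q)) * ∫ s in (0:ℝ)..t, rearrR ν f s}) :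
    ∀ t : ℝ, 0 < t →
      t ^ (-(1 / q)) * (∫ s in (0:ℝ)..t, rearrR (μ.prod ν) (fun w => x w.1 * f w.2) s) ≤
        q * (∫ s, |x s| ^ p ∂μ) ^ (1 / p) *
          sSup {r : ℝ | ∃ t : ℝ, 0 < t ∧
            r = t ^ (-(1 / q)) * ∫ s in (0:ℝ)..t, rearrR ν f s} :=
  stmt7_general μ ν p q hp hpq x f hxm hfm hxp hfw
end

section
/- Let x be a p-integrable function on a sigma-finite measure space X (1 < p < ∞) and let f_z(s) = e^{−s(1−z)/q} on ℝ with the measure e^s ds, where 1/p + 1/q = 1 and z in the closed strip with Re z < 1, q_z given by 1/q_z = (1−Re z)/q. Then the decreasing rearrangement of x ⊗ f_z on X × ℝ satisfies μ_{x⊗f_z}(s) = s^{−1/q_z}‖x‖_{L_{q_z}}, and hence ‖x ⊗ f_z‖_{L_{q_z,∞}} = p_z ‖x‖_{L_{q_z}(X)} where 1/p_z + 1/q_z = 1 and ‖·‖_{L_{q,∞}} denotes sup_{t>0} t^{−1/p_z} ∫₀^t μ(s) ds. -/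
/-!
Since `‖f_z(s)‖ = e^{-s/q_z}` and the measure `eˢ ds` gives `(-∞, b)` the mass `e^b`,
the slice of the level set `{‖x ⊗ f_z‖ > u}` over `y` has mass `‖x y‖^{q_z} u^{-q_z}`.
Integrating over `X`, the distribution function of `x ⊗ f_z` is `u^{-q_z} ‖x‖_{q_z}^{q_z}`,
whose generalised inverse is `s^{-1/q_z} ‖x‖_{q_z}`. As `∫₀ᵗ s^{-1/q_z} ds = p_z t^{1/p_z}`,
every quotient in the supremum equals `p_z ‖x‖_{q_z}`.
-/

open MeasureTheory

/-- The measure eˢ ds on ℝ. -/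
noncomputable def wmeasure : Measure ℝ :=
  MeasureTheory.volume.withDensity fun t => ENNReal.ofReal (Real.exp t)

/-- The function f_z(s) = e^{−s(1−z)/q}. -/
noncomputable def fz (q : ℝ) (z : ℂ) : ℝ → ℂ :=
  fun s => Complex.exp (-(s : ℂ) * (1 - z) / (q : ℂ))

/-- Decreasing rearrangement of `g` with respect to `μ`. -/
noncomputable def rearr {α : Type*} [MeasurableSpace α] (μ : Measure α)
    (g : α → ℂ) (s : ℝ) : ℝ :=
  sInf {u : ℝ | 0 < u ∧ μ {x | u < ‖g x‖} ≤ ENNReal.ofReal s}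

instance : SFinite wmeasure := by unfold wmeasure; infer_instance

lemma wmeasure_Iio (b : ℝ) : wmeasure (Set.Iio b) = ENNReal.ofReal (Real.exp b) := by
  rw [wmeasure, withDensity_apply _ measurableSet_Iio, setLIntegral_congr Iio_ae_eq_Iic,
    ← ofReal_integral_eq_lintegral_ofReal (integrableOn_exp_Iic b)
      (Filter.Eventually.of_forall fun t => (Real.exp_pos t).le),
    integral_exp_Iic]

lemma wmeasure_lt_mul_exp {a c u : ℝ} (ha : 0 < a) (hc : 0 ≤ c) (hu : 0 < u) :
    wmeasure {s : ℝ | u < c * Real.exp (-(s / a))} = ENNReal.ofReal (c ^ a * u ^ (-a)) := by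
  rcases hc.eq_or_lt with rfl | hc
  · simp [hu.not_gt, Real.zero_rpow ha.ne']
  have hset : {s : ℝ | u < c * Real.exp (-(s / a))} = Set.Iio (a * Real.log (c / u)) := by
    ext s
    simp only [Set.mem_ofPred_eq, Set.mem_Iio]
    rw [mul_comm c, ← div_lt_iff₀ hc, ← Real.log_lt_iff_lt_exp (div_pos hu hc), lt_neg,
      ← Real.log_inv, inv_div, div_lt_iff₀ ha, mul_comm]
  rw [hset, wmeasure_Iio, mul_comm, ← Real.rpow_def_of_pos (div_pos hc hu),
    Real.div_rpow hc.le hu.le, Real.rpow_neg hu.le, div_eq_mul_inv]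

lemma norm_fz (q : ℝ) (z : ℂ) (s : ℝ) : ‖fz q z s‖ = Real.exp (-(s * ((1 - z.re) / q))) := by
  have harg : -(s : ℂ) * (1 - z) / (q : ℂ) = ((-s / q : ℝ) : ℂ) * (1 - z) := by
    push_cast; ring
  rw [fz, harg, Complex.norm_exp, Complex.re_ofReal_mul, Complex.sub_re, Complex.one_re]
  ring_nf

lemma prod_wmeasure_lt_norm_mul_exp {X E : Type*} [MeasurableSpace X] {μ : Measure X}
    [NormedAddCommGroup E] [MeasurableSpace E] [OpensMeasurableSpace E] {g : X → E} {a u : ℝ}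
    (hgm : Measurable g) (hg : Integrable (fun y => ‖g y‖ ^ a) μ) (ha : 0 < a) (hu : 0 < u) :
    μ.prod wmeasure {w : X × ℝ | u < ‖g w.1‖ * Real.exp (-(w.2 / a))} =
      ENNReal.ofReal (u ^ (-a) * ∫ y, ‖g y‖ ^ a ∂μ) := by
  have hmeas : MeasurableSet {w : X × ℝ | u < ‖g w.1‖ * Real.exp (-(w.2 / a))} :=
    measurableSet_lt measurable_const (by fun_prop)
  have hslice (y : X) :
      wmeasure (Prod.mk y ⁻¹' {w : X × ℝ | u < ‖g w.1‖ * Real.exp (-(w.2 / a))}) =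
        ENNReal.ofReal (‖g y‖ ^ a) * ENNReal.ofReal (u ^ (-a)) := by
    change wmeasure {s : ℝ | u < ‖g y‖ * Real.exp (-(s / a))} = _
    rw [wmeasure_lt_mul_exp ha (norm_nonneg _) hu, ENNReal.ofReal_mul (by positivity)]
  have hnonneg : 0 ≤ᵐ[μ] fun y => ‖g y‖ ^ a :=
    Filter.Eventually.of_forall fun y => by positivity
  rw [Measure.prod_apply hmeas, lintegral_congr hslice,
    lintegral_mul_const _ ((hgm.norm.pow_const a).ennreal_ofReal),
    ← ofReal_integral_eq_lintegral_ofReal hg hnonneg,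
    ← ENNReal.ofReal_mul (integral_nonneg_of_ae hnonneg), mul_comm]

lemma rpow_neg_mul_le_iff {a N s u : ℝ} (ha : 0 < a) (hN : 0 ≤ N) (hs : 0 < s) (hu : 0 < u) :
    u ^ (-a) * N ≤ s ↔ (N / s) ^ (1 / a) ≤ u := by
  rw [Real.rpow_neg hu.le, inv_mul_le_iff₀ (by positivity), ← div_le_iff₀ hs, one_div,
    Real.rpow_inv_le_iff_of_pos (div_nonneg hN hs.le) hu.le ha]

lemma csInf_Ioi_inter_Ici {c : ℝ} (hc : 0 ≤ c) : sInf (Set.Ioi 0 ∩ Set.Ici c) = c := by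
  rcases hc.eq_or_lt with rfl | hc
  · rw [Set.inter_eq_left.2 Set.Ioi_subset_Ici_self, csInf_Ioi]
  · rw [Set.inter_eq_right.2 (Set.Ici_subset_Ioi.2 hc), csInf_Ici]

lemma rearr_eq_of_distribution {α : Type*} [MeasurableSpace α] {ν : Measure α} {g : α → ℂ}
    {a N : ℝ} (ha : 0 < a) (hN : 0 ≤ N)
    (hdist : ∀ u, 0 < u → ν {y | u < ‖g y‖} = ENNReal.ofReal (u ^ (-a) * N))
    {s : ℝ} (hs : 0 < s) :
    rearr ν g s = s ^ (-(1 / a)) * N ^ (1 / a) := by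
  have hset : {u : ℝ | 0 < u ∧ ν {y | u < ‖g y‖} ≤ ENNReal.ofReal s} =
      Set.Ioi 0 ∩ Set.Ici ((N / s) ^ (1 / a)) := by
    ext u
    refine and_congr_right fun hu => ?_
    rw [Set.mem_Ici, hdist u hu, ENNReal.ofReal_le_ofReal_iff hs.le,
      rpow_neg_mul_le_iff ha hN hs hu]
  rw [rearr, hset, csInf_Ioi_inter_Ici (by positivity), Real.div_rpow hN hs.le, div_eq_mul_inv,
    ← Real.rpow_neg hs.le, mul_comm]

lemma rpow_neg_mul_integral_rpow_sub_one_mul {r t : ℝ} (hr : 0 < r) (ht : 0 < t) (C : ℝ) :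
    t ^ (-r) * ∫ s in (0 : ℝ)..t, s ^ (r - 1) * C = C / r := by
  rw [intervalIntegral.integral_mul_const, integral_rpow (Or.inl (by linarith)), sub_add_cancel,
    Real.zero_rpow hr.ne', sub_zero, Real.rpow_neg ht.le]
  have : t ^ r ≠ 0 := (Real.rpow_pos_of_pos ht r).ne'
  field_simp

lemma csSup_setOf_exists_pos_eq {F : ℝ → ℝ} {K : ℝ} (hF : ∀ t, 0 < t → F t = K) :
    sSup {r : ℝ | ∃ t : ℝ, 0 < t ∧ r = F t} = K := by
  have hset : {r : ℝ | ∃ t : ℝ, 0 < t ∧ r = F t} = {K} := by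
    ext r
    refine ⟨fun ⟨t, ht, hr⟩ => hr.trans (hF t ht), fun hr => ⟨1, one_pos, ?_⟩⟩
    rw [hr, hF 1 one_pos]
  rw [hset, csSup_singleton]

theorem stmt8_general {X : Type*} [MeasurableSpace X] (μ : Measure X)
    (p q : ℝ) (hp : 1 < p) (hpq : 1 / p + 1 / q = 1)
    (z : ℂ) (hz0 : 0 ≤ z.re) (hz1 : z.re < 1)
    (qz pz : ℝ) (hqz : 1 / qz = (1 - z.re) / q) (hpz : 1 / pz + 1 / qz = 1)
    (x : X → ℂ) (hxm : Measurable x)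
    -- x ∈ L_{q_z}(X)
    (hx : Integrable (fun y => ‖x y‖ ^ qz) μ) :
    -- μ_{x⊗f_z}(s) = s^{−1/q_z} ‖x‖_{L_{q_z}}
    (∀ s : ℝ, 0 < s →
      rearr (μ.prod wmeasure) (fun w => x w.1 * fz q z w.2) s =
        s ^ (-(1 / qz)) * (∫ y, ‖x y‖ ^ qz ∂μ) ^ (1 / qz)) ∧
    -- ‖x ⊗ f_z‖_{L_{q_z,∞}} = p_z ‖x‖_{L_{q_z}}
    sSup {r : ℝ | ∃ t : ℝ, 0 < t ∧
      r = t ^ (-(1 / pz)) *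
        ∫ s in (0:ℝ)..t, rearr (μ.prod wmeasure) (fun w => x w.1 * fz q z w.2) s} =
      pz * (∫ y, ‖x y‖ ^ qz ∂μ) ^ (1 / qz) := by
  have hq : 1 < q := by
    have : 0 < 1 / p := by positivity
    have : 1 / p < 1 := (div_lt_one (by linarith)).2 hp
    rw [← div_lt_one (one_div_pos.1 (by linarith))]; linarith
  have hiqz : 0 < 1 / qz := by rw [hqz]; exact div_pos (by linarith) (by linarith)
  have hipz : 0 < 1 / pz := by
    have : 1 / qz < 1 := by rw [hqz, div_lt_one (by linarith)]; linarith
    linarith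
  set N := ∫ y, ‖x y‖ ^ qz ∂μ
  have hdist (u : ℝ) (hu : 0 < u) :
      μ.prod wmeasure {w | u < ‖x w.1 * fz q z w.2‖} = ENNReal.ofReal (u ^ (-qz) * N) := by
    simp_rw [norm_mul, norm_fz, ← hqz, mul_one_div]
    exact prod_wmeasure_lt_norm_mul_exp hxm hx (one_div_pos.1 hiqz) hu
  have hrearr (s : ℝ) (hs : 0 < s) :
      rearr (μ.prod wmeasure) (fun w => x w.1 * fz q z w.2) s =
        s ^ (-(1 / qz)) * N ^ (1 / qz) :=
    rearr_eq_of_distribution (one_div_pos.1 hiqz) (integral_nonneg fun y => by positivity)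
      hdist hs
  refine ⟨hrearr, csSup_setOf_exists_pos_eq fun t ht => ?_⟩
  have hexp : -(1 / qz) = 1 / pz - 1 := by linarith
  rw [intervalIntegral.integral_congr_ae (Filter.Eventually.of_forall fun s hs =>
      hrearr s (by rw [Set.uIoc_of_le ht.le] at hs; exact hs.1)),
    hexp, rpow_neg_mul_integral_rpow_sub_one_mul hipz ht, div_div_eq_mul_div, div_one, mul_comm]

theorem stmt8 {X : Type*} [MeasurableSpace X] (μ : Measure X) [SigmaFinite μ]
    (p q : ℝ) (hp : 1 < p) (hpq : 1 / p + 1 / q = 1)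
    (z : ℂ) (hz0 : 0 ≤ z.re) (hz1 : z.re < 1)
    (qz pz : ℝ) (hqz : 1 / qz = (1 - z.re) / q) (hpz : 1 / pz + 1 / qz = 1)
    (x : X → ℂ) (hxm : Measurable x)
    -- x ∈ L_{q_z}(X)
    (hx : Integrable (fun y => ‖x y‖ ^ qz) μ) :
    -- μ_{x⊗f_z}(s) = s^{−1/q_z} ‖x‖_{L_{q_z}}
    (∀ s : ℝ, 0 < s →
      rearr (μ.prod wmeasure) (fun w => x w.1 * fz q z w.2) s =
        s ^ (-(1 / qz)) * (∫ y, ‖x y‖ ^ qz ∂μ) ^ (1 / qz)) ∧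
    -- ‖x ⊗ f_z‖_{L_{q_z,∞}} = p_z ‖x‖_{L_{q_z}}
    sSup {r : ℝ | ∃ t : ℝ, 0 < t ∧
      r = t ^ (-(1 / pz)) *
        ∫ s in (0:ℝ)..t, rearr (μ.prod wmeasure) (fun w => x w.1 * fz q z w.2) s} =
      pz * (∫ y, ‖x y‖ ^ qz ∂μ) ^ (1 / qz) :=
  stmt8_general μ p q hp hpq z hz0 hz1 qz pz hqz hpz x hxm hx
end
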